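/- For each t ∈ εℤ with t > 0, Σ_{x∈εℤ} a₁(x,t,m,ε)² = (mε/√(1+m²ε²)) · Σ_{k=1}^{t/ε − 1} a₁(0, 2kε, m, ε). -/

import Mathlib

open scoped BigOperators

/-- The final x-coordinate of a checker path from `(0,0)` encoded by its sequence of moves
(`true` = move `(1,1)`, `false` = move `(-1,1)`). -/
def moveEndpoint {n : ℕ} (d : Fin n → Bool) : ℤ :=
  ∑ k, (if d k then (1 : ℤ) else -1)

/-- The number of turns of a checker path encoded by its sequence of moves. -/
def nturns {n : ℕ} (d : Fin n → Bool) : ℕ :=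
  ((List.ofFn d).zip (List.ofFn d).tail).countP fun p => p.1 != p.2

/-- Checker paths from `(0,0)` to `(x,t)` whose first step is to `(1,1)`,
encoded by their sequences of moves. -/
def cpaths (x t : ℤ) : Finset (Fin t.toNat → Bool) :=
  Finset.univ.filter fun d => moveEndpoint d = x ∧ (List.ofFn d).headI = true

/-- Feynman checkers amplitude with mass: `a(x·ε, t·ε, m, ε)` written in lattice
coordinates, i.e. `am m ε x t = (1+m²ε²)^((1-t)/2) * i * ∑ₛ (-i·m·ε)^turns(s)`. -/
noncomputable def am (m ε : ℝ) (x t : ℤ) : ℂ :=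
  (Real.sqrt (1 + m ^ 2 * ε ^ 2) : ℂ) ^ (1 - t) * Complex.I *
    ∑ d ∈ cpaths x t, (-Complex.I * (m * ε)) ^ nturns d

/-
Write `ψₙ(x) = a(x, (n+1)ε)` and `c = mε`. Splitting the checker paths by their last move gives
the Dirac equation `ψₙ₊₁(x) = (Re ψₙ(x+1) + c Im ψₙ(x+1), Im ψₙ(x-1) - c Re ψₙ(x-1)) / √(1+c²)`
with `ψ₀ = i δ₁`. This one-step operator is symmetric for the bilinear form
`B(f, g) = ∑_y Im ((1 - ic) f(y) g(y))`, hence `B(ψₙ, ψₙ) = B(ψ₂ₙ, ψ₀) = √(1+c²) Re ψ₂ₙ₊₁(0)`.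
Together with the pointwise identity `(Re w + c Im w)² = (1+c²) (Re w)² + c Im ((1 - ic) w²)`
this gives `∑ (Re ψₙ₊₁)² = ∑ (Re ψₙ)² + c / √(1+c²) Re ψ₂ₙ₊₁(0)`; now sum over `n`.
-/

open Complex

def diracStepRe (c : ℝ) (w : ℂ) : ℝ := w.re + c * w.im

def diracStepIm (c : ℝ) (w : ℂ) : ℝ := w.im - c * w.re

def diracStep (c : ℝ) (f : ℤ → ℂ) (x : ℤ) : ℂ :=
  ⟨diracStepRe c (f (x + 1)), diracStepIm c (f (x - 1))⟩

noncomputable def diracWave (c : ℝ) : ℕ → ℤ → ℂ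
  | 0 => Pi.single 1 I
  | n + 1 => fun x => diracStep c (diracWave c n) x / (Real.sqrt (1 + c ^ 2) : ℂ)

noncomputable def diracPairing (c : ℝ) (w v : ℂ) : ℝ := ((1 - c * I) * (w * v)).im

section

variable (c : ℝ)

lemma diracPairing_comm (w v : ℂ) : diracPairing c w v = diracPairing c v w := by
  rw [diracPairing, diracPairing, mul_comm w]

lemma diracPairing_eq (w v : ℂ) :
    diracPairing c w v = w.im * diracStepRe c v + w.re * diracStepIm c v := by
  simp only [diracPairing, diracStepRe, diracStepIm, mul_im, mul_re, sub_re, sub_im, one_re,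
    one_im, ofReal_re, ofReal_im, I_re, I_im]
  ring

lemma diracPairing_div_ofReal (w v : ℂ) (r : ℝ) :
    diracPairing c (w / r) v = diracPairing c w v / r := by
  rw [diracPairing, diracPairing, div_mul_eq_mul_div, mul_div_assoc', div_ofReal_im]

lemma diracPairing_I (w : ℂ) : diracPairing c w I = diracStepRe c w := by
  simp only [diracPairing_eq, diracStepRe, diracStepIm, I_re, I_im]
  ring

lemma diracStepRe_sq (w : ℂ) :
    diracStepRe c w ^ 2 = (1 + c ^ 2) * w.re ^ 2 + c * diracPairing c w w := by
  rw [diracPairing_eq, diracStepRe, diracStepIm]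
  ring

lemma tsum_shift_mul_add {A B C D : ℤ → ℝ} (hA : A.HasFiniteSupport) (hB : B.HasFiniteSupport)
    (hC : C.HasFiniteSupport) (hD : D.HasFiniteSupport) :
    ∑' y, (A (y - 1) * B y + C (y + 1) * D y) = ∑' y, (A y * B (y + 1) + C y * D (y - 1)) := by
  have shift (F : ℤ → ℝ) (k : ℤ) : ∑' y, F (y + k) = ∑' y, F y := (Equiv.addRight k).tsum_eq F
  rw [Summable.tsum_add (summable_of_hasFiniteSupport (hB.fun_mul_right _))
      (summable_of_hasFiniteSupport (hD.fun_mul_right _)),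
    Summable.tsum_add (summable_of_hasFiniteSupport (hA.fun_mul_left _))
      (summable_of_hasFiniteSupport (hC.fun_mul_left _)),
    ← shift (fun y => A (y - 1) * B y) 1, ← shift (fun y => C (y + 1) * D y) (-1)]
  simp [sub_eq_add_neg]

lemma tsum_diracPairing_diracStep {f g : ℤ → ℂ} (hf : f.HasFiniteSupport)
    (hg : g.HasFiniteSupport) :
    ∑' y, diracPairing c (diracStep c f y) (g y) =
      ∑' y, diracPairing c (f y) (diracStep c g y) := by
  have hre {h : ℤ → ℂ} (hh : h.HasFiniteSupport) :
      (fun y => diracStepRe c (h y)).HasFiniteSupport :=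
    hh.fun_comp (by simp [diracStepRe])
  have him {h : ℤ → ℂ} (hh : h.HasFiniteSupport) :
      (fun y => diracStepIm c (h y)).HasFiniteSupport :=
    hh.fun_comp (by simp [diracStepIm])
  simp_rw [diracPairing_comm c (f _), diracPairing_eq, diracStep]
  simpa [mul_comm, add_comm] using tsum_shift_mul_add (him hf) (hre hg) (hre hf) (him hg)

lemma diracWave_eq_zero {n : ℕ} {x : ℤ} (hx : (n : ℤ) + 1 < |x|) : diracWave c n x = 0 := by
  induction n generalizing x with
  | zero => simp [diracWave, show x ≠ 1 by rintro rfl; simp at hx]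
  | succ n ih =>
    have hx' : (n : ℤ) + 1 < |x + 1| ∧ (n : ℤ) + 1 < |x - 1| := by
      push_cast at hx; constructor <;> cases abs_cases x <;> cases abs_cases (x + 1) <;>
        cases abs_cases (x - 1) <;> omega
    simp [diracWave, diracStep, ih hx'.1, ih hx'.2, diracStepRe, diracStepIm, Complex.ext_iff]

lemma hasFiniteSupport_diracWave (n : ℕ) : (diracWave c n).HasFiniteSupport :=
  (Set.finite_Icc (-((n : ℤ) + 1)) (n + 1)).subset fun x hx => by
    by_contra h
    rw [Set.mem_Icc, not_and_or] at h
    exact hx (diracWave_eq_zero c (by cases abs_cases x <;> omega))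

lemma tsum_diracPairing_diracWave_succ (n s : ℕ) :
    ∑' y, diracPairing c (diracWave c (n + 1) y) (diracWave c s y) =
      ∑' y, diracPairing c (diracWave c n y) (diracWave c (s + 1) y) := by
  simp only [diracWave, diracPairing_div_ofReal, diracPairing_comm c (diracWave c n _)]
  rw [tsum_div_const, tsum_div_const, tsum_diracPairing_diracStep c
    (hasFiniteSupport_diracWave c n) (hasFiniteSupport_diracWave c s)]
  simp only [diracPairing_comm c (diracWave c n _)]

lemma tsum_diracPairing_diracWave_add (n s k : ℕ) :
    ∑' y, diracPairing c (diracWave c (n + k) y) (diracWave c s y) =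
      ∑' y, diracPairing c (diracWave c n y) (diracWave c (s + k) y) := by
  induction k generalizing s with
  | zero => rfl
  | succ k ih =>
    rw [← Nat.add_assoc, tsum_diracPairing_diracWave_succ, ih, Nat.add_right_comm s 1 k,
      Nat.add_assoc]

lemma tsum_diracPairing_diracWave_self (n : ℕ) :
    ∑' y, diracPairing c (diracWave c n y) (diracWave c n y) =
      Real.sqrt (1 + c ^ 2) * (diracWave c (2 * n + 1) 0).re := by
  have h := tsum_diracPairing_diracWave_add c n 0 n
  rw [zero_add] at h
  rw [← h, tsum_eq_single 1 fun y hy => by simp [diracWave, diracPairing, hy]]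
  simp only [diracWave, Pi.single_eq_same, diracPairing_I, diracStep, div_ofReal_re, zero_add,
    two_mul]
  field_simp

lemma tsum_re_sq_diracWave_succ (n : ℕ) :
    ∑' x, (diracWave c (n + 1) x).re ^ 2 =
      ∑' x, (diracWave c n x).re ^ 2 +
        c / Real.sqrt (1 + c ^ 2) * (diracWave c (2 * n + 1) 0).re := by
  have hN : Real.sqrt (1 + c ^ 2) ^ 2 = 1 + c ^ 2 := Real.sq_sqrt (by positivity)
  have hψ := hasFiniteSupport_diracWave c n
  calc ∑' x, (diracWave c (n + 1) x).re ^ 2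
      = ∑' x, (diracStepRe c (diracWave c n (x + 1)) / Real.sqrt (1 + c ^ 2)) ^ 2 := by
        simp [diracWave, diracStep, div_ofReal_re]
    _ = ∑' x, (diracStepRe c (diracWave c n x) / Real.sqrt (1 + c ^ 2)) ^ 2 :=
        (Equiv.addRight 1).tsum_eq fun x =>
          (diracStepRe c (diracWave c n x) / Real.sqrt (1 + c ^ 2)) ^ 2
    _ = ∑' x, ((diracWave c n x).re ^ 2 +
          c / (1 + c ^ 2) * diracPairing c (diracWave c n x) (diracWave c n x)) := by
        congr 1; ext x
        rw [div_pow, hN, diracStepRe_sq]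
        field_simp
    _ = _ := by
        rw [Summable.tsum_add
          (summable_of_hasFiniteSupport (hψ.fun_comp (g := fun w => w.re ^ 2) (by simp)))
          (summable_of_hasFiniteSupport (hψ.fun_comp
            (g := fun w => c / (1 + c ^ 2) * diracPairing c w w) (by simp [diracPairing]))),
          tsum_mul_left, tsum_diracPairing_diracWave_self]
        field_simp
        linear_combination c * (diracWave c (2 * n + 1) 0).re * hN

theorem tsum_re_sq_diracWave (n : ℕ) :
    ∑' x, (diracWave c n x).re ^ 2 =
      c / Real.sqrt (1 + c ^ 2) * ∑ k ∈ Finset.range n, (diracWave c (2 * k + 1) 0).re := by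
  induction n with
  | zero => simp [diracWave, Pi.single_apply, apply_ite]
  | succ n ih => rw [tsum_re_sq_diracWave_succ, ih, Finset.sum_range_succ, mul_add]

end

lemma List.zip_tail_append_singleton {α : Type*} (l : List α) (hl : l ≠ []) (b : α) :
    (l ++ [b]).zip (l ++ [b]).tail = l.zip l.tail ++ [(l.getLast hl, b)] := by
  induction l with
  | nil => contradiction
  | cons a l ih =>
    cases l with
    | nil => rfl
    | cons a' l' => simpa using ih (List.cons_ne_nil _ _)

lemma List.ofFn_snoc {α : Type*} {n : ℕ} (e : Fin n → α) (b : α) :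
    List.ofFn (Fin.snoc e b) = List.ofFn e ++ [b] := by
  rw [List.ofFn_succ']
  simp

lemma nturns_snoc {n : ℕ} (e : Fin (n + 1) → Bool) (b : Bool) :
    nturns (Fin.snoc e b) = nturns e + if e (Fin.last n) != b then 1 else 0 := by
  rw [nturns, nturns, List.ofFn_snoc, List.zip_tail_append_singleton _ (by simp),
    List.countP_append, List.getLast_ofFn]
  simp [Fin.last]

lemma moveEndpoint_snoc {n : ℕ} (e : Fin n → Bool) (b : Bool) :
    moveEndpoint (Fin.snoc e b) = moveEndpoint e + if b then 1 else -1 := by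
  simp [moveEndpoint, Fin.sum_univ_castSucc]

lemma headI_ofFn_snoc {n : ℕ} (e : Fin (n + 1) → Bool) (b : Bool) :
    (List.ofFn (Fin.snoc e b)).headI = (List.ofFn e).headI := by
  simp

lemma mem_cpaths {x : ℤ} {n : ℕ} {d : Fin n → Bool} :
    d ∈ cpaths x n ↔ moveEndpoint d = x ∧ (List.ofFn d).headI = true := by
  simp [cpaths]

lemma snoc_mem_cpaths {x : ℤ} {n : ℕ} {e : Fin (n + 1) → Bool} {b : Bool} :
    (Fin.snoc e b : Fin (n + 2) → Bool) ∈ cpaths x (n + 2 : ℕ) ↔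
      e ∈ cpaths (x - if b then 1 else -1) (n + 1 : ℕ) := by
  rw [mem_cpaths, mem_cpaths, moveEndpoint_snoc, headI_ofFn_snoc, eq_sub_iff_add_eq]

lemma sum_cpaths_filter_last_eq_sum_snoc {M : Type*} [AddCommMonoid M] (x : ℤ) (n : ℕ) (b : Bool)
    (F : (Fin (n + 2) → Bool) → M) :
    ∑ d ∈ cpaths x (n + 2 : ℕ) with d (Fin.last (n + 1)) = b, F d =
      ∑ e ∈ cpaths (x - if b then 1 else -1) (n + 1 : ℕ), F (Fin.snoc e b) := by
  have snoc_init {d : Fin (n + 2) → Bool} (hd : d (Fin.last (n + 1)) = b) :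
      Fin.snoc (Fin.init d) b = d := hd ▸ Fin.snoc_init_self d
  refine Finset.sum_nbij' Fin.init (Fin.snoc · b) (fun d hd => ?_)
    (fun e he => Finset.mem_filter.2 ⟨snoc_mem_cpaths.2 he, Fin.snoc_last _ _⟩)
    (fun d hd => snoc_init (Finset.mem_filter.1 hd).2) (fun e _ => Fin.init_snoc _ _)
    (fun d hd => by rw [snoc_init (Finset.mem_filter.1 hd).2])
  obtain ⟨hmem, hlast⟩ := Finset.mem_filter.1 hd
  rw [← snoc_init hlast] at hmem
  exact snoc_mem_cpaths.1 hmem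

noncomputable def turnSum (z : ℂ) (x : ℤ) (n : ℕ) (b : Bool) : ℂ :=
  ∑ d ∈ cpaths x (n + 1 : ℕ) with d (Fin.last n) = b, z ^ nturns d

lemma turnSum_zero (z : ℂ) (x : ℤ) (b : Bool) :
    turnSum z x 0 b = if x = 1 ∧ b = true then 1 else 0 := by
  rw [turnSum, Finset.sum_filter, cpaths, Finset.sum_filter]
  change ∑ d : Fin 1 → Bool, _ = _
  rw [← (Equiv.funUnique (Fin 1) Bool).symm.sum_comp]
  simp [moveEndpoint, nturns, eq_comm, ite_and]

lemma turnSum_succ (z : ℂ) (x : ℤ) (n : ℕ) (b : Bool) :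
    turnSum z x (n + 1) b =
      turnSum z (x - if b then 1 else -1) n b +
        z * turnSum z (x - if b then 1 else -1) n (!b) := by
  rw [turnSum, sum_cpaths_filter_last_eq_sum_snoc, turnSum, turnSum, Finset.sum_filter,
    Finset.sum_filter, Finset.mul_sum, ← Finset.sum_add_distrib]
  refine Finset.sum_congr rfl fun e _ => ?_
  rw [nturns_snoc, pow_add]
  cases e (Fin.last n) <;> cases b <;> simp [mul_comm]

-- A path ending with an upward-right move makes an even number of turns, any other an odd one.
lemma im_turnSum_true_eq_zero_and_re_turnSum_false_eq_zero {z : ℂ} (hz : z.re = 0) (n : ℕ)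
    (x : ℤ) : (turnSum z x n true).im = 0 ∧ (turnSum z x n false).re = 0 := by
  induction n generalizing x with
  | zero => simp [turnSum_zero, apply_ite]
  | succ n ih => simp [turnSum_succ, hz, (ih _).1, (ih _).2]

lemma am_eq_turnSum (m ε : ℝ) (x : ℤ) (n : ℕ) :
    am m ε x (n + 1 : ℕ) =
      I * (turnSum (-I * (m * ε)) x n true + turnSum (-I * (m * ε)) x n false) /
        (Real.sqrt (1 + m ^ 2 * ε ^ 2) : ℂ) ^ n := by
  rw [am, ← Finset.sum_filter_add_sum_filter_not (cpaths x (n + 1 : ℕ))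
    (fun d => d (Fin.last n) = true)]
  simp only [Bool.not_eq_true]
  rw [← turnSum, ← turnSum, show (1 : ℤ) - (n + 1 : ℕ) = -n by push_cast; ring, zpow_neg,
    zpow_natCast, div_eq_inv_mul, mul_assoc]

lemma re_am (m ε : ℝ) (x : ℤ) (n : ℕ) :
    (am m ε x (n + 1 : ℕ)).re =
      -(turnSum (-I * (m * ε)) x n false).im / Real.sqrt (1 + m ^ 2 * ε ^ 2) ^ n := by
  rw [am_eq_turnSum, ← ofReal_pow, div_ofReal_re, I_mul_re, add_im,
    (im_turnSum_true_eq_zero_and_re_turnSum_false_eq_zero (by simp) n x).1, zero_add]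

lemma im_am (m ε : ℝ) (x : ℤ) (n : ℕ) :
    (am m ε x (n + 1 : ℕ)).im =
      (turnSum (-I * (m * ε)) x n true).re / Real.sqrt (1 + m ^ 2 * ε ^ 2) ^ n := by
  rw [am_eq_turnSum, ← ofReal_pow, div_ofReal_im, I_mul_im, add_re,
    (im_turnSum_true_eq_zero_and_re_turnSum_false_eq_zero (by simp) n x).2, add_zero]

lemma am_add_two (m ε : ℝ) (x : ℤ) (n : ℕ) :
    am m ε x (n + 1 + 1 : ℕ) =
      diracStep (m * ε) (fun y => am m ε y (n + 1 : ℕ)) x /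
        (Real.sqrt (1 + (m * ε) ^ 2) : ℂ) := by
  have hN : Real.sqrt (1 + m ^ 2 * ε ^ 2) ≠ 0 := by positivity
  apply Complex.ext
  · rw [re_am, div_ofReal_re, diracStep, diracStepRe, re_am, im_am, turnSum_succ, mul_pow]
    simp only [Bool.false_eq_true, if_false, sub_neg_eq_add, Bool.not_false, add_im, mul_im,
      mul_re, neg_re, neg_im, I_re, I_im, ofReal_re, ofReal_im]
    field_simp
    ring
  · rw [im_am, div_ofReal_im, diracStep, diracStepIm, re_am, im_am, turnSum_succ, mul_pow]
    simp only [if_true, Bool.not_true, add_re, mul_im, mul_re, neg_re, neg_im, I_re, I_im,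
      ofReal_re, ofReal_im]
    field_simp
    ring

lemma am_eq_diracWave (m ε : ℝ) (n : ℕ) (x : ℤ) :
    am m ε x (n + 1 : ℕ) = diracWave (m * ε) n x := by
  induction n generalizing x with
  | zero =>
    rw [am_eq_turnSum, turnSum_zero, turnSum_zero]
    by_cases hx : x = 1 <;> simp [diracWave, hx]
  | succ n ih => simp only [am_add_two, ih, diracWave]

lemma sum_Icc_one_eq_sum_range {M : Type*} [AddCommMonoid M] (f : ℤ → M) (n : ℕ) :
    ∑ k ∈ Finset.Icc (1 : ℤ) n, f k = ∑ k ∈ Finset.range n, f (k + 1) := by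
  induction n with
  | zero => simp
  | succ n ih =>
    rw [Finset.sum_range_succ, ← ih, Nat.cast_succ,
      ← Finset.insert_Icc_right_eq_Icc_add_one (by omega), Finset.sum_insert (by simp), add_comm]

theorem sum_a1_sq_eq_general (m ε : ℝ) (t : ℤ) (ht : 0 < t) :
    ∑' x : ℤ, (am m ε x t).re ^ 2 =
      m * ε / Real.sqrt (1 + m ^ 2 * ε ^ 2) *
        ∑ k ∈ Finset.Icc (1 : ℤ) (t - 1), (am m ε 0 (2 * k)).re := by
  obtain ⟨n, rfl⟩ : ∃ n : ℕ, t = (n + 1 : ℕ) := ⟨(t - 1).toNat, by omega⟩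
  have h2k (k : ℕ) : am m ε 0 (2 * ((k : ℤ) + 1)) = diracWave (m * ε) (2 * k + 1) 0 := by
    rw [← am_eq_diracWave]; push_cast; ring_nf
  simp only [am_eq_diracWave]
  rw [Nat.cast_add_one, add_sub_cancel_right, sum_Icc_one_eq_sum_range, ← mul_pow]
  simp only [h2k]
  exact tsum_re_sq_diracWave (m * ε) n

/-- For each `t ∈ εℤ`, `t > 0`:
`∑_{x ∈ εℤ} a₁(x,t,m,ε)² = (mε/√(1+m²ε²)) ∑_{k=1}^{t/ε - 1} a₁(0, 2kε, m, ε)`. -/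
theorem sum_a1_sq_eq (m ε : ℝ) (hε : 0 < ε) (hm : 0 ≤ m) (t : ℤ) (ht : 0 < t) :
    ∑' x : ℤ, (am m ε x t).re ^ 2 =
      m * ε / Real.sqrt (1 + m ^ 2 * ε ^ 2) *
        ∑ k ∈ Finset.Icc (1 : ℤ) (t - 1), (am m ε 0 (2 * k)).re :=
  sum_a1_sq_eq_general m ε t ht
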